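/- arXiv:1206.4838 — 10 statements merged into one kernel-verified Lean document; each statement's English description precedes it below -/
import Mathlib

section
/- Let Λ be an even lattice of signature (2,ρ), and v ∈ Λ a primitive vector with ℓ := ⟨v²⟩/2 ≥ 4. Let v₁, w₁ ∈ Λ be primitive isotropic vectors with ⟨v,v₁⟩ = ⟨v,w₁⟩ = 2 and w₁ ∉ ℤv₁. Then there is no ξ ∈ Λ with ⟨ξ²⟩ > 0 and ⟨ξ,v⟩ = ⟨ξ,v₁⟩ = ⟨ξ,w₁⟩ = 0. Equivalently, v₁^⊥ ∩ w₁^⊥ ∩ P⁺(v^⊥) = ∅. -/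
set_option maxHeartbeats 1000000 in
/-- for a primitive `v` with `⟨v²⟩ = 2ℓ`, `ℓ ≥ 4`, in an even
lattice of signature `(2,ρ)` (encoded by the hypothesis `hsig` that the
orthogonal complement of any positive-definite plane `⟨ξ, v⟩` is negative
definite), and primitive isotropic `v₁, w₁` with `⟨v,v₁⟩ = ⟨v,w₁⟩ = 2` and
`w₁ ∉ ℤv₁`, there is no `ξ ∈ Λ` with `⟨ξ²⟩ > 0` orthogonal to `v, v₁, w₁`;
i.e. `v₁^⊥ ∩ w₁^⊥ ∩ P⁺(v^⊥) = ∅`. -/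
theorem walls_I2_do_not_meet
    {Λ : Type*} [AddCommGroup Λ] [Module ℤ Λ] [NoZeroSMulDivisors ℤ Λ]
    (B : Λ →ₗ[ℤ] Λ →ₗ[ℤ] ℤ) (hsymm : ∀ x y : Λ, B x y = B y x)
    (heven : ∀ x : Λ, 2 ∣ B x x)
    (v v₁ w₁ : Λ) (ℓ : ℤ)
    (hvprim : ∀ (m : ℤ) (x : Λ), v = m • x → IsUnit m)
    (hv2 : B v v = 2 * ℓ) (hl : 4 ≤ ℓ)
    (hv1prim : ∀ (m : ℤ) (x : Λ), v₁ = m • x → IsUnit m)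
    (hw1prim : ∀ (m : ℤ) (x : Λ), w₁ = m • x → IsUnit m)
    (h1 : B v₁ v₁ = 0) (h2 : B w₁ w₁ = 0)
    (hp1 : B v v₁ = 2) (hp2 : B v w₁ = 2)
    (hnot : ¬ ∃ m : ℤ, w₁ = m • v₁)
    (hsig : ∀ ξ y : Λ, 0 < B ξ ξ → B ξ v = 0 → B y ξ = 0 → B y v = 0 →
      y ≠ 0 → B y y < 0) :
    ¬ ∃ ξ : Λ, 0 < B ξ ξ ∧ B ξ v = 0 ∧ B ξ v₁ = 0 ∧ B ξ w₁ = 0 := by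
  rintro ⟨ξ, hξ2, hξv, hξv1, hξw1⟩
  -- helper facts about the ℤ-action (the `•` here is the `zsmul` of `AddCommGroup`)
  have hkey : ∀ (n : ℤ) (x : Λ), n • x = 0 → n = 0 ∨ x = 0 := fun n x h =>
    eq_zero_or_eq_zero_of_smul_eq_zero h
  have hsub : ∀ (n : ℤ) (x y : Λ), n • (x - y) = n • x - n • y := fun n x y => by
    rw [← Int.cast_smul_eq_zsmul ℤ n (x - y), ← Int.cast_smul_eq_zsmul ℤ n x,
      ← Int.cast_smul_eq_zsmul ℤ n y, smul_sub]
  have hadd : ∀ (n : ℤ) (x y : Λ), n • (x + y) = n • x + n • y := fun n x y => by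
    rw [← Int.cast_smul_eq_zsmul ℤ n (x + y), ← Int.cast_smul_eq_zsmul ℤ n x,
      ← Int.cast_smul_eq_zsmul ℤ n y, smul_add]
  have hsl : ∀ (n : ℤ) (x y : Λ), B (n • x) y = n * B x y := fun n x y => by
    rw [map_zsmul]; rfl
  have hsr : ∀ (n : ℤ) (x y : Λ), B x (n • y) = n * B x y := fun n x y => by
    rw [map_zsmul]; rfl
  have hp1' : B v₁ v = 2 := (hsymm v₁ v).trans hp1
  have hp2' : B w₁ v = 2 := (hsymm w₁ v).trans hp2
  set c := B v₁ w₁ with hc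
  have hc' : B w₁ v₁ = c := (hsymm w₁ v₁)
  have hξv1' : B v₁ ξ = 0 := (hsymm v₁ ξ).trans hξv1
  have hξw1' : B w₁ ξ = 0 := (hsymm w₁ ξ).trans hξw1
  have hξv' : B v ξ = 0 := (hsymm v ξ).trans hξv
  clear_value c
  set a := v - ℓ • v₁ with ha
  set b := v - ℓ • w₁ with hb
  have haa : B a a = -2*ℓ := by
    simp only [ha, map_sub, LinearMap.sub_apply, hsl, hsr, hv2, hp1, hp1', h1]; ring
  have hbb : B b b = -2*ℓ := by
    simp only [hb, map_sub, LinearMap.sub_apply, hsl, hsr, hv2, hp2, hp2', h2]; ring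
  have hab : B a b = ℓ*(ℓ*c) - 2*ℓ := by
    simp only [ha, hb, map_sub, LinearMap.sub_apply, hsl, hsr, hv2, hp2, hp1', ← hc]; ring
  have hav : B a v = 0 := by
    simp only [ha, map_sub, LinearMap.sub_apply, hsl, hsr, hv2, hp1']; ring
  have hbv : B b v = 0 := by
    simp only [hb, map_sub, LinearMap.sub_apply, hsl, hsr, hv2, hp2']; ring
  have haξ : B a ξ = 0 := by
    simp only [ha, map_sub, LinearMap.sub_apply, hsl, hsr, hξv', hξv1']; ring
  have hbξ : B b ξ = 0 := by
    simp only [hb, map_sub, LinearMap.sub_apply, hsl, hsr, hξv', hξw1']; ring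
  have hba : B b a = B a b := hsymm b a
  clear_value a b
  have hl0 : (0:ℤ) < ℓ := by linarith
  set D : ℤ := B a a * B b b - B a b * B a b with hDdef
  set y : Λ := B b b • a - B a b • b with hy
  have hyy : B y y = B b b * D := by
    simp only [hy, hDdef, map_sub, LinearMap.sub_apply, hsl, hsr, hba]; ring
  have hyξ : B y ξ = 0 := by
    simp only [hy, map_sub, LinearMap.sub_apply, hsl, hsr, haξ, hbξ]; ring
  have hyv : B y v = 0 := by
    simp only [hy, map_sub, LinearMap.sub_apply, hsl, hsr, hav, hbv]; ring
  clear_value D y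
  have hD : 0 ≤ D := by
    by_contra hneg
    push_neg at hneg
    by_cases h0 : y = 0
    · rw [h0] at hyy
      simp only [map_zero, LinearMap.zero_apply] at hyy
      rw [hbb] at hyy
      have hpos : 0 < -2*ℓ*D := mul_pos_of_neg_of_neg (by linarith) hneg
      linarith
    · have hlt := hsig ξ y hξ2 hξv hyξ hyv h0
      rw [hyy, hbb] at hlt
      have hpos : 0 < -2*ℓ*D := mul_pos_of_neg_of_neg (by linarith) hneg
      linarith
  have hDval : D = 4*ℓ^2 - (ℓ*(ℓ*c) - 2*ℓ)^2 := by
    rw [hDdef, haa, hbb, hab]; ring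
  set t := ℓ * c with ht
  clear_value t
  rw [hDval] at hD
  have hsq : (t - 2)^2 ≤ 4 := by
    by_contra hgt
    push_neg at hgt
    have h5 : 5 ≤ (t-2)^2 := hgt
    nlinarith [mul_le_mul_of_nonneg_left h5 (mul_pos hl0 hl0).le, mul_pos hl0 hl0]
  have ht0 : 0 ≤ t := by nlinarith [hsq]
  have ht4 : t ≤ 4 := by nlinarith [hsq]
  rcases le_or_gt c 0 with hcle | hcgt
  · -- in this case t = ℓ*c = 0 and a - b is a nonzero isotropic vector in the
    -- negative definite part: contradiction
    have htle : t ≤ 0 := by rw [ht]; nlinarith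
    have ht00 : t = 0 := le_antisymm htle ht0
    set d : Λ := a - b with hd
    have hdd : B d d = 0 := by
      simp only [hd, map_sub, LinearMap.sub_apply, haa, hbb, hab, hba, ht00]; ring
    have hdξ : B d ξ = 0 := by
      simp only [hd, map_sub, LinearMap.sub_apply, haξ, hbξ]; ring
    have hdv : B d v = 0 := by
      simp only [hd, map_sub, LinearMap.sub_apply, hav, hbv]; ring
    have hdne : d ≠ 0 := by
      intro h
      rw [hd, ha, hb] at h
      have e : ℓ • (w₁ - v₁) = (v - ℓ • v₁) - (v - ℓ • w₁) := by
        rw [hsub]; abel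
      have hz : ℓ • (w₁ - v₁) = 0 := by rw [e, h]
      rcases hkey ℓ _ hz with h' | h'
      · omega
      · rw [sub_eq_zero] at h'
        exact hnot ⟨1, by rw [one_zsmul]; exact h'⟩
    have := hsig ξ d hξ2 hξv hdξ hdv hdne
    rw [hdd] at this; exact absurd this (lt_irrefl 0)
  · -- here c ≥ 1, forcing ℓ = 4, c = 1, equality in Cauchy-Schwarz, and
    -- v = 2•(v₁ + w₁), contradicting primitivity of v
    have hc1 : 1 ≤ c := hcgt
    have hlc : ℓ * c ≤ 4 := by rw [← ht]; exact ht4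
    have h6 : ℓ * 1 ≤ ℓ * c := mul_le_mul_of_nonneg_left hc1 hl0.le
    have hl4 : ℓ = 4 := by linarith
    have hcc : c = 1 := by rw [hl4] at hlc; omega
    have ht4' : t = 4 := by rw [ht, hl4, hcc]; norm_num
    have hD0 : D = 0 := by rw [hDval, ht4', hl4]; ring
    have hy0 : y = 0 := by
      by_contra h0
      have hlt := hsig ξ y hξ2 hξv hyξ hyv h0
      rw [hyy, hD0, mul_zero] at hlt
      exact absurd hlt (lt_irrefl 0)
    have habval : B a b = 2*ℓ := by rw [hab, ht4', hl4]; ring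
    have h : B b b • a - B a b • b = 0 := by rw [← hy]; exact hy0
    rw [hbb, habval] at h
    have e : (-2*ℓ) • (a + b) = (-2*ℓ) • a - (2*ℓ) • b := by
      rw [hadd, show ((-2*ℓ):ℤ) = -(2*ℓ) by ring, neg_zsmul, neg_zsmul]; abel
    have hz2 : (-2*ℓ) • (a + b) = 0 := by rw [e]; exact h
    rcases hkey _ _ hz2 with h' | h'
    · omega
    · rw [ha, hb, hl4] at h'
      have e4 : ((2:ℤ)) • ((2:ℤ) • (v₁ + w₁)) = (4:ℤ) • v₁ + (4:ℤ) • w₁ := by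
        rw [← mul_zsmul]
        norm_num [hadd]
      have e2 : (2:ℤ) • (v - (2:ℤ) • (v₁ + w₁)) = (v - (4:ℤ) • v₁) + (v - (4:ℤ) • w₁) := by
        rw [hsub, e4, two_zsmul]; abel
      have hz3 : (2:ℤ) • (v - (2:ℤ) • (v₁ + w₁)) = 0 := by rw [e2]; exact h'
      rcases hkey _ _ hz3 with h'' | h''
      · norm_num at h''
      · rw [sub_eq_zero] at h''
        have := hvprim 2 (v₁ + w₁) h''
        rw [Int.isUnit_iff] at this
        omega
end

section
/- Let X be an abelian surface with NS(X) = ℤH ⊥ L where H is ample and L negative definite, and suppose (H²) = 2ℓ(4ℓra + 1) for positive integers r, a, ℓ. Set v := (2ℓr, H, 2ℓa) in the Mukai lattice. Then ⟨v²⟩ = 2ℓ, the pairing ⟨v,w⟩ is divisible by 2ℓ for every w in the algebraic Mukai lattice, and consequently no vector v₁ satisfies the wall conditions ⟨v₁, v−v₁⟩ > 0, ⟨v₁²⟩ ≥ 0, ⟨(v−v₁)²⟩ ≥ 0 for v. -/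
/-- The Mukai pairing on `ℤ ⊕ NS(X) ⊕ ℤ` where `NS(X) = ℤH ⊥ L`,
`(H²) = h2`, and `ipL` is the intersection form on `L`. A vector is
`(r, (x, l), a)` where `x` is the coefficient of `H`. -/
def mukaiPairingHL {L : Type*} [AddCommGroup L] [Module ℤ L]
    (h2 : ℤ) (ipL : L →ₗ[ℤ] L →ₗ[ℤ] ℤ)
    (v w : ℤ × (ℤ × L) × ℤ) : ℤ :=
  (h2 * v.2.1.1 * w.2.1.1 + ipL v.2.1.2 w.2.1.2) - v.1 * w.2.2 - w.1 * v.2.2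

/-- if `NS(X) = ℤH ⊥ L` with `L` negative definite and
`(H²) = 2ℓ(4ℓra + 1)`, then `v = (2ℓr, H, 2ℓa)` has `⟨v²⟩ = 2ℓ`, all pairings
`⟨v,w⟩` are divisible by `2ℓ`, and no `v₁` satisfies the wall conditions. -/
theorem no_wall_example
    {L : Type*} [AddCommGroup L] [Module ℤ L] [NoZeroSMulDivisors ℤ L]
    (ipL : L →ₗ[ℤ] L →ₗ[ℤ] ℤ) (hsymm : ∀ x y : L, ipL x y = ipL y x)
    (hneg : ∀ l : L, l ≠ 0 → ipL l l < 0)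
    (ℓ r a : ℤ) (hℓ : 0 < ℓ) (hr : 0 < r) (ha : 0 < a) :
    mukaiPairingHL (2*ℓ*(4*ℓ*r*a + 1)) ipL
        (2*ℓ*r, ((1 : ℤ), (0 : L)), 2*ℓ*a) (2*ℓ*r, ((1 : ℤ), (0 : L)), 2*ℓ*a)
      = 2*ℓ ∧
    (∀ w : ℤ × (ℤ × L) × ℤ,
      (2*ℓ) ∣ mukaiPairingHL (2*ℓ*(4*ℓ*r*a + 1)) ipL
        (2*ℓ*r, ((1 : ℤ), (0 : L)), 2*ℓ*a) w) ∧
    ¬ ∃ v₁ : ℤ × (ℤ × L) × ℤ,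
        0 < mukaiPairingHL (2*ℓ*(4*ℓ*r*a + 1)) ipL v₁
              ((2*ℓ*r, ((1 : ℤ), (0 : L)), 2*ℓ*a) - v₁) ∧
        0 ≤ mukaiPairingHL (2*ℓ*(4*ℓ*r*a + 1)) ipL v₁ v₁ ∧
        0 ≤ mukaiPairingHL (2*ℓ*(4*ℓ*r*a + 1)) ipL
              ((2*ℓ*r, ((1 : ℤ), (0 : L)), 2*ℓ*a) - v₁)
              ((2*ℓ*r, ((1 : ℤ), (0 : L)), 2*ℓ*a) - v₁) := by
  refine ⟨by simp [mukaiPairingHL]; ring, ?_, ?_⟩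
  · intro w
    simp only [mukaiPairingHL, map_zero, LinearMap.zero_apply]
    exact ⟨(4*ℓ*r*a+1)*w.2.1.1 - r*w.2.2 - w.1*a, by ring⟩
  · rintro ⟨⟨r1, ⟨x1, l1⟩, a1⟩, hp, hs1, hs2⟩
    simp only [mukaiPairingHL, Prod.fst_sub, Prod.snd_sub, map_sub, map_zero,
      LinearMap.sub_apply, LinearMap.zero_apply] at hp hs1 hs2
    set A := ipL l1 l1 with hA
    set k : ℤ := (4*ℓ*r*a+1)*x1 - r*a1 - r1*a with hk
    have h1 : 0 < 2*ℓ*k := by nlinarith [hp, hs1]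
    have h2 : 2*ℓ*k < 2*ℓ := by nlinarith [hp, hs2]
    have hk1 : 1 ≤ k := by nlinarith
    nlinarith
end

section
/- Let n, ℓ be positive integers with √(nℓ) irrational. Then the Pell equation X² − nℓY² = 1 has a solution (p,q) ∈ ℤ² with q ≠ 0, and for a Mukai vector v = (r, dH, a) with (H²) = 2n and ℓ = d²n − ra, the matrix A = [[p − dnq, −aq√n],[rq√n, p + dnq]] satisfies ᵗA · M · A = M, where M = [[r, d√n],[d√n, a]]; i.e. A stabilizes v under the action g ↦ ᵗg M g. In particular the stabilizer group is infinite. -/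
open Matrix

/-- The matrix `M = [[r, d√n],[d√n, a]]` associated to the Mukai vector
`(r, dH, a)` with `(H²) = 2n`. -/
noncomputable def mukaiMat (n r d a : ℤ) : Matrix (Fin 2) (Fin 2) ℝ :=
  !![(r : ℝ), (d : ℝ) * Real.sqrt (n : ℝ);
     (d : ℝ) * Real.sqrt (n : ℝ), (a : ℝ)]

/-- The stabilizing matrix `A = [[p − dnq, −aq√n],[rq√n, p + dnq]]` built
from a Pell solution `(p,q)`. -/
noncomputable def pellStabMat (n r d a p q : ℤ) : Matrix (Fin 2) (Fin 2) ℝ :=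
  !![(p : ℝ) - (d : ℝ) * (n : ℝ) * (q : ℝ),
       -(a : ℝ) * (q : ℝ) * Real.sqrt (n : ℝ);
     (r : ℝ) * (q : ℝ) * Real.sqrt (n : ℝ),
       (p : ℝ) + (d : ℝ) * (n : ℝ) * (q : ℝ)]

lemma stab_eq (n ℓ r d a p q : ℤ) (hn : 0 ≤ n)
    (hrel : ℓ = d ^ 2 * n - r * a) (hpq : p ^ 2 - n * ℓ * q ^ 2 = 1) :
    (pellStabMat n r d a p q)ᵀ * mukaiMat n r d a * pellStabMat n r d a p q
      = mukaiMat n r d a := by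
  obtain ⟨s, hsdef⟩ : ∃ s : ℝ, Real.sqrt (n : ℝ) = s := ⟨_, rfl⟩
  have hs : (n : ℝ) = s * s := by
    rw [← hsdef]; exact (Real.mul_self_sqrt (by exact_mod_cast hn)).symm
  have h1 : (p : ℝ) ^ 2 - (n : ℝ) * ((d : ℝ) ^ 2 * n - r * a) * q ^ 2 = 1 := by
    have := hpq; rw [hrel] at this; exact_mod_cast this
  rw [hs] at h1
  ext i j
  fin_cases i <;> fin_cases j <;>
    simp only [mukaiMat, pellStabMat, Matrix.mul_apply, Fin.sum_univ_two,
      Matrix.transpose_apply, Matrix.cons_val', Matrix.cons_val_zero, Matrix.cons_val_one,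
      Matrix.head_cons, Matrix.empty_val', Matrix.cons_val_fin_one, Matrix.head_fin_const,
      Fin.mk_zero, Fin.mk_one, Matrix.vecHead, Matrix.vecTail, Function.comp_apply,
      Fin.isValue, of_apply] <;>
    rw [hsdef, hs]
  · linear_combination (r : ℝ) * h1
  · linear_combination (d : ℝ) * s * h1
  · linear_combination (d : ℝ) * s * h1
  · linear_combination (a : ℝ) * h1

lemma pellStab_y_inj (n r d a p p' q q' : ℤ) (hn : 0 < n) (hrd : r ≠ 0 ∨ d ≠ 0)
    (h : pellStabMat n r d a p q = pellStabMat n r d a p' q') : q = q' := by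
  have hsne : Real.sqrt (n : ℝ) ≠ 0 := by
    refine ne_of_gt (Real.sqrt_pos.mpr ?_); exact_mod_cast hn
  have h10 := congr_fun (congr_fun h 1) 0
  have h00 := congr_fun (congr_fun h 0) 0
  have h11 := congr_fun (congr_fun h 1) 1
  simp only [pellStabMat, of_apply, Matrix.cons_val', Matrix.cons_val_zero,
    Matrix.cons_val_one, Matrix.head_cons, Matrix.empty_val', Matrix.cons_val_fin_one,
    Matrix.head_fin_const] at h10 h00 h11
  rcases hrd with hr | hd
  · have hr' : (r : ℝ) ≠ 0 := Int.cast_ne_zero.mpr hr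
    have h2 : (r : ℝ) * q = r * q' := mul_right_cancel₀ hsne h10
    have h3 : (q : ℝ) = q' := mul_left_cancel₀ hr' h2
    exact_mod_cast h3
  · have hd' : (d : ℝ) ≠ 0 := Int.cast_ne_zero.mpr hd
    have hn' : (n : ℝ) ≠ 0 := by positivity
    have : (d : ℝ) * n * q = d * n * q' := by linarith [h00, h11]
    have : (q : ℝ) = q' := by
      field_simp at this
      tauto
    exact_mod_cast this

/-- if `√(nℓ)` is irrational then the Pell equation
`X² − nℓY² = 1` has a solution with `q ≠ 0`, the associated matrix `A`
satisfies `ᵗA·M·A = M` (i.e. stabilizes the Mukai vector `v = (r,dH,a)`),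
and the stabilizer is infinite. -/
theorem pell_gives_infinite_stabilizer
    (n ℓ r d a : ℤ) (hn : 0 < n) (hℓ : 0 < ℓ)
    (hirr : Irrational (Real.sqrt ((n : ℝ) * (ℓ : ℝ))))
    (hrel : ℓ = d ^ 2 * n - r * a) :
    (∃ p q : ℤ, q ≠ 0 ∧ p ^ 2 - n * ℓ * q ^ 2 = 1 ∧
      (pellStabMat n r d a p q)ᵀ * mukaiMat n r d a * pellStabMat n r d a p q
        = mukaiMat n r d a) ∧
    Set.Infinite {A : Matrix (Fin 2) (Fin 2) ℝ |
      Aᵀ * mukaiMat n r d a * A = mukaiMat n r d a ∧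
      ∃ p q : ℤ, p ^ 2 - n * ℓ * q ^ 2 = 1 ∧ A = pellStabMat n r d a p q} := by
  have hD : 0 < n * ℓ := mul_pos hn hℓ
  have hns : ¬ IsSquare (n * ℓ) := by
    rintro ⟨k, hk⟩
    apply Int.not_irrational |k|
    have hcast : (n : ℝ) * (ℓ : ℝ) = (k : ℝ) ^ 2 := by
      have : ((n * ℓ : ℤ) : ℝ) = ((k * k : ℤ) : ℝ) := by rw [hk]
      push_cast at this; rw [this]; ring
    rwa [hcast, Real.sqrt_sq_eq_abs, show |(k : ℝ)| = ((|k| : ℤ) : ℝ) by push_cast; ring] at hirr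
  obtain ⟨a₁, ha₁⟩ := Pell.IsFundamental.exists_of_not_isSquare hD hns
  have hrd : r ≠ 0 ∨ d ≠ 0 := by
    by_contra hc
    push_neg at hc
    rw [hc.1, hc.2] at hrel
    simp at hrel
    omega
  have hprop : ∀ m : ℤ, (a₁ ^ m).x ^ 2 - n * ℓ * (a₁ ^ m).y ^ 2 = 1 := fun m =>
    (a₁ ^ m).prop
  constructor
  · exact ⟨a₁.x, a₁.y, ha₁.2.1.ne', a₁.prop,
      stab_eq n ℓ r d a a₁.x a₁.y hn.le hrel a₁.prop⟩
  · apply Set.infinite_of_injective_forall_mem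
      (f := fun m : ℤ => pellStabMat n r d a ((a₁ ^ m).x) ((a₁ ^ m).y))
    · intro m₁ m₂ h
      have hy : (a₁ ^ m₁).y = (a₁ ^ m₂).y :=
        pellStab_y_inj n r d a _ _ _ _ hn hrd h
      exact ha₁.y_strictMono.injective hy
    · intro m
      exact ⟨stab_eq n ℓ r d a _ _ hn.le hrel (hprop m), _, _, hprop m, rfl⟩
end

section
/- Let n, ℓ be positive integers and consider matrices of the form g = X·I₂ + Z·F where F = [[−d√n, −a],[r, d√n]], r, a, d ∈ ℤ, ℓ = d²n − ra. Then F² = ℓ·I₂, and g satisfies ᵗg M g = (det g)·M for M = [[r, d√n],[d√n, a]], with det g = X² − ℓZ². Conversely, any g = [[x,y],[z,w]] with ᵗgMg = ε·M and xw − yz = ε (ε = ±1) is of this form with X = x + d√n·z/r, Z = z/r. -/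
open Matrix

/-- `F = [[−d√n, −a],[r, d√n]]`. -/
noncomputable def Fmat (n r d a : ℤ) : Matrix (Fin 2) (Fin 2) ℝ :=
  !![-(d : ℝ) * Real.sqrt (n : ℝ), -(a : ℝ);
     (r : ℝ), (d : ℝ) * Real.sqrt (n : ℝ)]

/-- `M = [[r, d√n],[d√n, a]]`, the matrix of the Mukai vector `(r, dH, a)`
with `(H²) = 2n`. -/
noncomputable def Mmat (n r d a : ℤ) : Matrix (Fin 2) (Fin 2) ℝ :=
  !![(r : ℝ), (d : ℝ) * Real.sqrt (n : ℝ);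
     (d : ℝ) * Real.sqrt (n : ℝ), (a : ℝ)]

/-- `F² = ℓ·I₂`; every `g = X·I₂ + Z·F` satisfies
`ᵗg M g = (det g)·M` with `det g = X² − ℓZ²`; conversely any
`g = [[x,y],[z,w]]` with `ᵗgMg = ε·M`, `xw − yz = ε`, `ε = ±1` is of this
form with `X = x + d√n·z/r`, `Z = z/r`. -/
theorem stab0_classification
    (n ℓ r d a : ℤ) (hn : 0 < n) (hℓ : 0 < ℓ) (hr : r ≠ 0)
    (hrel : ℓ = d ^ 2 * n - r * a) :
    Fmat n r d a * Fmat n r d a = (ℓ : ℝ) • (1 : Matrix (Fin 2) (Fin 2) ℝ) ∧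
    (∀ X Z : ℝ,
      (X • (1 : Matrix (Fin 2) (Fin 2) ℝ) + Z • Fmat n r d a)ᵀ * Mmat n r d a *
          (X • (1 : Matrix (Fin 2) (Fin 2) ℝ) + Z • Fmat n r d a)
        = (X • (1 : Matrix (Fin 2) (Fin 2) ℝ) + Z • Fmat n r d a).det •
            Mmat n r d a ∧
      (X • (1 : Matrix (Fin 2) (Fin 2) ℝ) + Z • Fmat n r d a).det
        = X ^ 2 - (ℓ : ℝ) * Z ^ 2) ∧
    (∀ x y z w ε : ℝ, (ε = 1 ∨ ε = -1) →
      (!![x, y; z, w])ᵀ * Mmat n r d a * !![x, y; z, w] = ε • Mmat n r d a →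
      x * w - y * z = ε →
      !![x, y; z, w]
        = (x + (d : ℝ) * Real.sqrt (n : ℝ) * z / (r : ℝ)) •
            (1 : Matrix (Fin 2) (Fin 2) ℝ) + (z / (r : ℝ)) • Fmat n r d a) := by
  have hs2 : Real.sqrt (n : ℝ) ^ 2 = (n : ℝ) := Real.sq_sqrt (by positivity)
  have hL : (ℓ : ℝ) = (d : ℝ) ^ 2 * (n : ℝ) - (r : ℝ) * (a : ℝ) := by
    exact_mod_cast congrArg (Int.cast : ℤ → ℝ) hrel
  have hr' : (r : ℝ) ≠ 0 := Int.cast_ne_zero.mpr hr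
  have hFt : (Fmat n r d a)ᵀ
      = !![-(d : ℝ) * Real.sqrt (n : ℝ), (r : ℝ);
           -(a : ℝ), (d : ℝ) * Real.sqrt (n : ℝ)] := by
    ext i j; fin_cases i <;> fin_cases j <;> rfl
  refine ⟨?_, ?_, ?_⟩
  · ext i j
    fin_cases i <;> fin_cases j <;>
        simp [Fmat, Matrix.mul_apply, Fin.sum_univ_two, Matrix.one_apply, hL] <;>
      first
        | ring1
        | linear_combination ((d : ℝ) ^ 2) * hs2
  · intro X Z
    have hdet : (X • (1 : Matrix (Fin 2) (Fin 2) ℝ) + Z • Fmat n r d a).det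
        = X ^ 2 - (ℓ : ℝ) * Z ^ 2 := by
      rw [Matrix.det_fin_two]
      simp [Fmat, Matrix.one_apply, hL]
      linear_combination (-(Z ^ 2 * (d : ℝ) ^ 2)) * hs2
    refine ⟨?_, hdet⟩
    rw [hdet]
    have hgt : (X • (1 : Matrix (Fin 2) (Fin 2) ℝ) + Z • Fmat n r d a)ᵀ
        = X • (1 : Matrix (Fin 2) (Fin 2) ℝ) +
          Z • !![-(d : ℝ) * Real.sqrt (n : ℝ), (r : ℝ);
                 -(a : ℝ), (d : ℝ) * Real.sqrt (n : ℝ)] := by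
      rw [Matrix.transpose_add, Matrix.transpose_smul, Matrix.transpose_smul,
        Matrix.transpose_one, hFt]
    rw [hgt]
    ext i j
    fin_cases i <;> fin_cases j <;>
      simp [Fmat, Mmat, Matrix.mul_apply, Fin.sum_univ_two, Matrix.one_apply, hL]
    · linear_combination (-(Z ^ 2 * (d : ℝ) ^ 2 * (r : ℝ))) * hs2
    · linear_combination (-(Z ^ 2 * (d : ℝ) ^ 3 * Real.sqrt (n : ℝ))) * hs2
    · linear_combination (-(Z ^ 2 * (d : ℝ) ^ 3 * Real.sqrt (n : ℝ))) * hs2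
    · linear_combination (-(Z ^ 2 * (d : ℝ) ^ 2 * (a : ℝ))) * hs2
  · intro x y z w ε hε heq hdet
    have hεne : ε ≠ 0 := by rcases hε with h | h <;> rw [h] <;> norm_num
    have htr : (!![x, y; z, w])ᵀ = !![x, z; y, w] := by
      ext i j; fin_cases i <;> fin_cases j <;> rfl
    rw [htr] at heq
    have h00 := congrFun (congrFun heq 0) 0
    have h01 := congrFun (congrFun heq 0) 1
    simp [Mmat, Matrix.mul_apply, Fin.sum_univ_two] at h00 h01
    have e1 : z * ((r : ℝ) * y + (a : ℝ) * z)
        = x * ((r : ℝ) * w - (r : ℝ) * x - 2 * ((d : ℝ) * Real.sqrt (n : ℝ)) * z) := by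
      linear_combination h00 - (r : ℝ) * hdet
    have e2 : w * ((r : ℝ) * y + (a : ℝ) * z)
        = y * ((r : ℝ) * w - (r : ℝ) * x - 2 * ((d : ℝ) * Real.sqrt (n : ℝ)) * z) := by
      linear_combination h01 - ((d : ℝ) * Real.sqrt (n : ℝ)) * hdet
    have hA : (r : ℝ) * y + (a : ℝ) * z = 0 := by
      have h3 : ((r : ℝ) * y + (a : ℝ) * z) * ε = 0 := by
        linear_combination x * e2 - y * e1 - ((r : ℝ) * y + (a : ℝ) * z) * hdet
      exact (mul_eq_zero.mp h3).resolve_right hεne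
    have hB : (r : ℝ) * w - (r : ℝ) * x - 2 * ((d : ℝ) * Real.sqrt (n : ℝ)) * z = 0 := by
      by_contra hBne
      have hxB : x * ((r : ℝ) * w - (r : ℝ) * x - 2 * ((d : ℝ) * Real.sqrt (n : ℝ)) * z)
          = 0 := by rw [← e1, hA, mul_zero]
      have hyB : y * ((r : ℝ) * w - (r : ℝ) * x - 2 * ((d : ℝ) * Real.sqrt (n : ℝ)) * z)
          = 0 := by rw [← e2, hA, mul_zero]
      have hx : x = 0 := (mul_eq_zero.mp hxB).resolve_right hBne
      have hy : y = 0 := (mul_eq_zero.mp hyB).resolve_right hBne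
      rw [hx, hy] at hdet
      simp at hdet
      exact hεne hdet.symm
    ext i j
    fin_cases i <;> fin_cases j
    · simp [Fmat, Matrix.one_apply]
      field_simp
      ring
    · simp [Fmat, Matrix.one_apply]
      field_simp
      linarith [hA]
    · simp [Fmat, Matrix.one_apply]
      field_simp
    · simp [Fmat, Matrix.one_apply]
      field_simp
      linarith [hB]
end

section
/- Let n, ℓ ∈ ℤ_{>0} with √(nℓ) irrational, and suppose X·I₂ + Z·F is in the stabilizer Stab₀(v) (with F as above, F² = ℓI₂), arising from a matrix in Ĝ. Then α := X + Z√ℓ is an algebraic integer whose square lies in ℚ(√(nℓ)). -/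
/-- if `√(nℓ)` is irrational and `g = X·I₂ + Z·F ∈ Stab₀(v)`
arises from a matrix of `Ĝ` (so the entries `x = X − d√n Z`, `y = −aZ`,
`z = rZ`, `w = X + d√n Z` satisfy the integrality constraints of `Ĝ` and
`xw − yz = ε = ±1`), then `α := X + Z√ℓ` is an algebraic integer with
`α² ∈ ℚ(√(nℓ))`. -/
theorem stab0_element_gives_algebraic_integer
    (n ℓ r d a : ℤ) (hn : 0 < n) (hℓ : 0 < ℓ)
    (hirr : Irrational (Real.sqrt ((n : ℝ) * (ℓ : ℝ))))
    (hrel : ℓ = d ^ 2 * n - r * a)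
    (X Z : ℝ) (ε : ℝ) (hε : ε = 1 ∨ ε = -1)
    (x y z w : ℝ)
    (hx : x = X - (d : ℝ) * Real.sqrt (n : ℝ) * Z)
    (hy : y = -(a : ℝ) * Z)
    (hz : z = (r : ℝ) * Z)
    (hw : w = X + (d : ℝ) * Real.sqrt (n : ℝ) * Z)
    (hx2 : ∃ m : ℤ, x ^ 2 = m) (hy2 : ∃ m : ℤ, y ^ 2 = m)
    (hz2 : ∃ m : ℤ, z ^ 2 = m) (hw2 : ∃ m : ℤ, w ^ 2 = m)
    (hxw : ∃ m : ℤ, x * w = m) (hyz : ∃ m : ℤ, y * z = m)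
    (hxy : ∃ m : ℤ, x * y / Real.sqrt (n : ℝ) = m)
    (hxz : ∃ m : ℤ, x * z / Real.sqrt (n : ℝ) = m)
    (hyw : ∃ m : ℤ, y * w / Real.sqrt (n : ℝ) = m)
    (hzw : ∃ m : ℤ, z * w / Real.sqrt (n : ℝ) = m)
    (hdet : x * w - y * z = ε) :
    IsIntegral ℤ (X + Z * Real.sqrt (ℓ : ℝ)) ∧
      ∃ p q : ℚ, (X + Z * Real.sqrt (ℓ : ℝ)) ^ 2
        = (p : ℝ) + (q : ℝ) * Real.sqrt ((n : ℝ) * (ℓ : ℝ)) := by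
  set s := Real.sqrt (n : ℝ) with hs
  set t := Real.sqrt (ℓ : ℝ) with ht
  have hs2 : s ^ 2 = (n : ℝ) := Real.sq_sqrt (by positivity)
  have ht2 : t ^ 2 = (ℓ : ℝ) := Real.sq_sqrt (by positivity)
  have hspos : 0 < s := Real.sqrt_pos.mpr (by exact_mod_cast hn)
  have hs0 : s ≠ 0 := ne_of_gt hspos
  have hl : (ℓ : ℝ) = (d : ℝ) ^ 2 * n - r * a := by exact_mod_cast congrArg (Int.cast : ℤ → ℝ) hrel
  have hu : Real.sqrt ((n : ℝ) * (ℓ : ℝ)) = s * t := Real.sqrt_mul (by positivity) _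
  -- the key norm relation
  have key : X ^ 2 - (ℓ : ℝ) * Z ^ 2 = ε := by
    rw [hx, hy, hz, hw] at hdet
    linear_combination hdet + (d : ℝ) ^ 2 * Z ^ 2 * hs2 - Z ^ 2 * hl
  set α := X + Z * t with hα
  have hα2 : α ^ 2 = 2 * X * α - ε := by
    rw [hα]; linear_combination Z ^ 2 * ht2 - key
  obtain ⟨e, he, he2⟩ : ∃ e : ℤ, (e : ℝ) = ε ∧ (e = 1 ∨ e = -1) := by
    rcases hε with h | h
    · exact ⟨1, by simp [h], Or.inl rfl⟩
    · exact ⟨-1, by simp [h], Or.inr rfl⟩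
  have hε2 : ε ^ 2 = 1 := by rcases hε with h | h <;> rw [h] <;> ring
  obtain ⟨m1, hm1⟩ := hx2
  obtain ⟨m4, hm4⟩ := hw2
  obtain ⟨m5, hm5⟩ := hxw
  have hxw2 : x + w = 2 * X := by rw [hx, hw]; ring
  have hM : ((m1 + 2 * m5 + m4 : ℤ) : ℝ) = 4 * X ^ 2 := by
    push_cast
    rw [← hm1, ← hm4, ← hm5]
    linear_combination (x + w + 2 * X) * hxw2
  have hint : IsIntegral ℤ α := by
    refine ⟨Polynomial.X ^ 4 - Polynomial.C (m1 + 2 * m5 + m4 - 2 * e) * Polynomial.X ^ 2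
      + Polynomial.C 1, ?_, ?_⟩
    · monicity!
    · simp only [Polynomial.eval₂_add, Polynomial.eval₂_sub, Polynomial.eval₂_pow,
        Polynomial.eval₂_mul, Polynomial.eval₂_X, Polynomial.eval₂_C]
      simp only [algebraMap_int_eq, eq_intCast]
      have hce : ((m1 + 2 * m5 + m4 - 2 * e : ℤ) : ℝ) = 4 * X ^ 2 - 2 * ε := by
        push_cast [← he]
        push_cast at hM
        linarith [hM]
      rw [hce]
      push_cast
      linear_combination (α ^ 2 + 2 * X * α + ε) * hα2 - hε2
  refine ⟨hint, ?_⟩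
  -- r and a not both zero
  have hra : r ≠ 0 ∨ a ≠ 0 := by
    by_contra h
    push_neg at h
    obtain ⟨hr0, ha0⟩ := h
    apply hirr
    refine ⟨|d * n|, ?_⟩
    have : (n : ℝ) * (ℓ : ℝ) = ((d * n : ℤ) : ℝ) ^ 2 := by
      rw [hl, hr0, ha0]; push_cast; ring
    rw [this, Real.sqrt_sq_eq_abs]
    push_cast
    rfl
  -- rational Z² and X·Z/√n
  obtain ⟨q0, hq0, q1, hq1⟩ : ∃ q0 : ℚ, Z ^ 2 = (q0 : ℝ) ∧ ∃ q1 : ℚ, X * Z = (q1 : ℝ) * s := by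
    rcases hra with hr | ha
    · obtain ⟨mz, hmz⟩ := hz2
      obtain ⟨mxz, hmxz⟩ := hxz
      have hr' : (r : ℝ) ≠ 0 := Int.cast_ne_zero.mpr hr
      rw [hz] at hmz
      rw [hx, hz] at hmxz
      field_simp at hmxz
      refine ⟨mz / r ^ 2, ?_, (mxz * r + d * mz) / r ^ 2, ?_⟩
      · push_cast
        rw [eq_div_iff (pow_ne_zero 2 hr')]
        linear_combination hmz
      · push_cast
        rw [div_mul_eq_mul_div, eq_div_iff (pow_ne_zero 2 hr')]
        linear_combination (r : ℝ) * hmxz + (d : ℝ) * s * hmz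
    · obtain ⟨my, hmy⟩ := hy2
      obtain ⟨myw, hmyw⟩ := hyw
      have ha' : (a : ℝ) ≠ 0 := Int.cast_ne_zero.mpr ha
      rw [hy] at hmy
      rw [hy, hw] at hmyw
      field_simp at hmyw
      refine ⟨my / a ^ 2, ?_, (-(myw * a) - d * my) / a ^ 2, ?_⟩
      · push_cast
        rw [eq_div_iff (pow_ne_zero 2 ha')]
        linear_combination hmy
      · push_cast
        rw [div_mul_eq_mul_div, eq_div_iff (pow_ne_zero 2 ha')]
        linear_combination -(a : ℝ) * hmyw - (d : ℝ) * s * hmy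
  refine ⟨e + 2 * ℓ * q0, 2 * q1, ?_⟩
  rw [hu]
  push_cast
  linear_combination Z ^ 2 * ht2 + key + 2 * (ℓ : ℝ) * hq0 + 2 * t * hq1 - he
end

section
/- Let NS be a lattice of signature (1, ρ−1) with ρ ≥ 2 (the Néron–Severi lattice of an abelian surface with rk NS ≥ 2). Fix ξ₀ ∈ NS, an element ξ of positive square with (ξ, h) > 0 for an ample class (i.e. ξ ample), r ∈ ℤ_{>0} and ℓ ∈ ℤ_{>0}. Then there exist k ∈ ℤ and η ∈ NS such that ξ₁ := ξ₀ + r(kξ + η) satisfies (ξ₁²) > 0 and √(2ℓ/(ξ₁²)) is irrational. -/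
/-!
Pick `η₀ ⊥ ξ` with `η₀² < 0`. Because `η₀ ⊥ ξ`, the squares of `ξ₀ + r(kξ + mη₀)` for two
values of `m` differ by a constant independent of `k`, and nonzero for a suitable `m`; call
`Δ ≠ 0` that difference times `2ℓ`. As `ξ² > 0`, for large `k` the integer `2ℓ(ξ₀ + rkξ)²`
exceeds `Δ²`, whereas two squares that differ by `Δ` are at most `Δ²`.
-/

lemma irrational_sqrt_intCast_div {L Q : ℤ} (hL : 0 < L) (hQ : 0 < Q)
    (hLQ : ¬ IsSquare (L * Q)) : Irrational √((L : ℝ) / Q) := by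
  have hQ' : (0 : ℝ) < Q := by exact_mod_cast hQ
  have hsqrt : √((L : ℝ) / Q) = √((L * Q : ℤ) : ℝ) / Q := by
    rw [show (L : ℝ) / Q = ((L * Q : ℤ) : ℝ) / (Q : ℝ) ^ 2 by push_cast; field_simp,
      Real.sqrt_div' _ (by positivity), Real.sqrt_sq hQ'.le]
  rw [hsqrt]
  exact ((irrational_sqrt_intCast_iff_of_nonneg (by positivity)).mpr hLQ).div_intCast hQ.ne'

namespace Int

lemma le_sq_of_isSquare_of_isSquare_add {n Δ : ℤ} (hΔ : Δ ≠ 0) (hn : IsSquare n)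
    (hnΔ : IsSquare (n + Δ)) : n ≤ Δ ^ 2 := by
  obtain ⟨x, rfl⟩ := hn
  obtain ⟨y, hy⟩ := hnΔ
  rw [← abs_mul_abs_self x] at hy ⊢
  rw [← abs_mul_abs_self y] at hy
  have hne : |y| ≠ |x| := by rintro h; rw [h] at hy; omega
  have hgap : 1 ≤ |(|y| - |x|)| := Int.one_le_abs (sub_ne_zero.mpr hne)
  have hΔ_eq : |Δ| = |(|y| - |x|)| * (|y| + |x|) := by
    rw [show Δ = (|y| - |x|) * (|y| + |x|) by linarith, abs_mul,
      abs_of_nonneg (by positivity : 0 ≤ |y| + |x|)]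
  have hx : |x| ≤ |Δ| := by nlinarith [abs_nonneg x, abs_nonneg y]
  calc |x| * |x| ≤ |Δ| * |Δ| := mul_le_mul hx hx (abs_nonneg x) (abs_nonneg Δ)
    _ = Δ ^ 2 := by rw [abs_mul_abs_self, sq]

lemma exists_lt_quadratic (a b c T : ℤ) (hc : 0 < c) : ∃ k : ℤ, T < a + b * k + c * k ^ 2 := by
  refine ⟨|a| + |b| + |T| + 1, ?_⟩
  nlinarith [neg_abs_le a, neg_abs_le b, le_abs_self T, abs_nonneg a, abs_nonneg b, abs_nonneg T]

lemma exists_pos_not_isSquare_mul_add {ι : Type*} (a : ι → ℤ) {i j : ι} (hij : a i ≠ a j)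
    (f : ℤ → ℤ) (hf : ∀ T, ∃ k, T < f k) {L : ℤ} (hL : 0 < L) :
    ∃ k x, 0 < a x + f k ∧ ¬ IsSquare (L * (a x + f k)) := by
  set Δ := L * (a j - a i)
  have hΔ : Δ ≠ 0 := mul_ne_zero hL.ne' (sub_ne_zero.mpr hij.symm)
  obtain ⟨k, hk⟩ := hf (Δ ^ 2 - a i)
  have hi : Δ ^ 2 < L * (a i + f k) := by nlinarith [sq_nonneg Δ]
  by_cases hsq : IsSquare (L * (a i + f k))
  · have hj : L * (a j + f k) = L * (a i + f k) + Δ := by ring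
    refine ⟨k, j, pos_of_mul_pos_right (by nlinarith) hL.le, fun hsq' ↦ ?_⟩
    have := le_sq_of_isSquare_of_isSquare_add hΔ hsq (hj ▸ hsq')
    omega
  · exact ⟨k, i, pos_of_mul_pos_right (by nlinarith [sq_nonneg Δ]) hL.le, hsq⟩

end Int

namespace LinearMap

variable {M : Type*} [AddCommGroup M] [Module ℤ M] (B : M →ₗ[ℤ] M →ₗ[ℤ] ℤ)

lemma apply_add_zsmul_add_zsmul (hB : ∀ x y, B x y = B y x) (u v : M) (t : ℤ) :
    B (u + t • v) (u + t • v) = B u u + 2 * t * B u v + t ^ 2 * B v v := by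
  simp only [map_add, map_zsmul, LinearMap.add_apply, LinearMap.smul_apply, smul_eq_mul, hB v u]
  ring

lemma apply_add_zsmul_zsmul_add_of_apply_eq_zero (hB : ∀ x y, B x y = B y x) {ξ η : M}
    (hξη : B ξ η = 0) (u : M) (r k : ℤ) :
    B (u + r • (k • ξ + η)) (u + r • (k • ξ + η)) =
      B (u + r • η) (u + r • η) + 2 * r * B u ξ * k + r ^ 2 * B ξ ξ * k ^ 2 := by
  have hsplit : u + r • (k • ξ + η) = u + r • η + (r * k) • ξ := by
    rw [zsmul_add, mul_zsmul]; abel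
  have hηξ : B (u + r • η) ξ = B u ξ := by simp [hB η ξ, hξη]
  rw [hsplit, apply_add_zsmul_add_zsmul B hB, hηξ]
  ring

end LinearMap

/-- The signature `(1, ρ - 1)`, `ρ ≥ 2`, is encoded by `hsig`: every vector of positive square
has an orthogonal vector of negative square. -/
theorem exists_irrational_square_ratio_general
    {N : Type*} [AddCommGroup N] [Module ℤ N]
    (ip : N →ₗ[ℤ] N →ₗ[ℤ] ℤ) (hsymm : ∀ x y : N, ip x y = ip y x)
    (hsig : ∀ x : N, 0 < ip x x → ∃ η : N, ip x η = 0 ∧ ip η η < 0)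
    (ξ₀ ξ : N) (r ℓ : ℤ) (hr : 0 < r) (hℓ : 0 < ℓ)
    (hξ : 0 < ip ξ ξ) :
    ∃ (k : ℤ) (η : N),
      0 < ip (ξ₀ + r • (k • ξ + η)) (ξ₀ + r • (k • ξ + η)) ∧
      Irrational (Real.sqrt ((2 * (ℓ : ℝ)) /
        ((ip (ξ₀ + r • (k • ξ + η)) (ξ₀ + r • (k • ξ + η)) : ℤ) : ℝ))) := by
  obtain ⟨η₀, hξη₀, hη₀⟩ := hsig ξ hξ
  set a : ℤ → ℤ := fun m ↦ ip (ξ₀ + r • m • η₀) (ξ₀ + r • m • η₀)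
  have ha : ∀ m, a m = ip ξ₀ ξ₀ + 2 * r * ip ξ₀ η₀ * m + r ^ 2 * ip η₀ η₀ * m ^ 2 := by
    intro m
    simp only [a, ← mul_zsmul, ip.apply_add_zsmul_add_zsmul hsymm]
    ring
  obtain ⟨m, hm⟩ : ∃ m, a 0 ≠ a m := by
    obtain ⟨m, hm⟩ := Int.exists_lt_quadratic 0 (-(2 * r * ip ξ₀ η₀)) (-(r ^ 2 * ip η₀ η₀)) 0
      (by nlinarith)
    exact ⟨m, by rw [ha, ha]; intro h; linarith⟩
  obtain ⟨k, m', hpos, hns⟩ := Int.exists_pos_not_isSquare_mul_add a hm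
    (fun k ↦ 2 * r * ip ξ₀ ξ * k + r ^ 2 * ip ξ ξ * k ^ 2)
    (fun T ↦ by simpa using Int.exists_lt_quadratic 0 _ _ T (by positivity))
    (by positivity : 0 < 2 * ℓ)
  have hval : ip (ξ₀ + r • (k • ξ + m' • η₀)) (ξ₀ + r • (k • ξ + m' • η₀)) =
      a m' + (2 * r * ip ξ₀ ξ * k + r ^ 2 * ip ξ ξ * k ^ 2) := by
    rw [ip.apply_add_zsmul_zsmul_add_of_apply_eq_zero hsymm (by simp [hξη₀]), add_assoc]
  refine ⟨k, m' • η₀, hval ▸ hpos, ?_⟩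
  rw [hval]
  exact_mod_cast irrational_sqrt_intCast_div (by positivity : 0 < 2 * ℓ) hpos hns

/-- for a lattice `NS` of signature `(1, ρ−1)`, `ρ ≥ 2`
(the signature is encoded by `hsig`: any positive vector has an orthogonal
vector of negative square), `ξ₀ ∈ NS`, an ample class `ξ` (positive square
and positive pairing with an ample `h`), and positive integers `r, ℓ`, there
are `k ∈ ℤ` and `η ∈ NS` with `ξ₁ := ξ₀ + r(kξ + η)` of positive square
such that `√(2ℓ/(ξ₁²))` is irrational. -/
theorem exists_irrational_square_ratio
    {N : Type*} [AddCommGroup N] [Module ℤ N] [NoZeroSMulDivisors ℤ N]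
    (ip : N →ₗ[ℤ] N →ₗ[ℤ] ℤ) (hsymm : ∀ x y : N, ip x y = ip y x)
    (hsig : ∀ x : N, 0 < ip x x → ∃ η : N, ip x η = 0 ∧ ip η η < 0)
    (ξ₀ ξ h : N) (r ℓ : ℤ) (hr : 0 < r) (hℓ : 0 < ℓ)
    (hξ : 0 < ip ξ ξ) (hh : 0 < ip h h) (hξh : 0 < ip ξ h) :
    ∃ (k : ℤ) (η : N),
      0 < ip (ξ₀ + r • (k • ξ + η)) (ξ₀ + r • (k • ξ + η)) ∧
      Irrational (Real.sqrt ((2 * (ℓ : ℝ)) /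
        ((ip (ξ₀ + r • (k • ξ + η)) (ξ₀ + r • (k • ξ + η)) : ℤ) : ℝ))) :=
  exists_irrational_square_ratio_general ip hsymm hsig ξ₀ ξ r ℓ hr hℓ hξ
end

section
/- Fix positive integers ℓ, n with ⟨v²⟩/(H²)-ratio m = ℓ/n, and let NS be a lattice of signature (1, ρ−1). Set Q_ℓ := {ξ ∈ NS⊗ℝ : (ξ²) = 2ℓ} and, for m ∈ ℚ_{>0}, Q_{ℓ,m} := {ξ ∈ √m · (NS⊗ℚ) : (ξ²) = 2ℓ}. Then every nonempty Q_{ℓ,m} is dense in Q_ℓ: explicitly, if ξ₀ ∈ Q_{ℓ,m} and η₀ = ξ₀/√m, then every element of Q_{ℓ,m} near a given point of Q_ℓ can be written √m(η₀ − 2((η₀,u)/(u²))·u) for suitable u ∈ NS⊗ℚ with (u²) ≠ 0, and these reflections of η₀ are dense in Q_ℓ. -/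
open Matrix

/-!
If `(ξ, ξ) = (ξ₀, ξ₀) > 0` and `ξ ≠ ξ₀`, then `(ξ₀ - ξ)² = 2 (ξ₀, ξ₀ - ξ)`, and this cannot vanish:
in signature `(1, ρ - 1)` a vector orthogonal to a positive one is isotropic only if it is zero.
Hence `ξ` is the reflection of `ξ₀` in `w = ξ₀ - ξ`. When `ξ, ξ₀ ∈ √m · ℚ^ρ`, `w` is itself
`√m` times a rational vector, which gives the explicit form. For density, the reflection of `ξ₀`
in `u` depends continuously on `u` near `w` and stays on the quadric; taking `u` rational keeps
it in `√m · ℚ^ρ`, and rational vectors are dense.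
-/

namespace LinearMap.BilinForm

variable {K V : Type*} [Field K] [AddCommGroup V] [Module K V] (B : LinearMap.BilinForm K V)

/-- If `B u u = 0` the division gives `0`, so the reflection in `u` is the identity; this keeps
`apply_reflection_reflection` unconditional. -/
def reflection (u a : V) : V := a - (2 * (B a u / B u u)) • u

lemma reflection_smul_left (c : K) (u a : V) :
    B.reflection u (c • a) = c • B.reflection u a := by
  simp only [reflection, map_smul, LinearMap.smul_apply, smul_eq_mul, smul_sub, smul_smul]
  congr 2
  ring

lemma reflection_smul_right {c : K} (hc : c ≠ 0) (u a : V) :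
    B.reflection (c • u) a = B.reflection u a := by
  simp only [reflection, map_smul, LinearMap.smul_apply, smul_eq_mul, smul_smul]
  congr 2
  field_simp

variable {B}

lemma apply_reflection_reflection (hB : B.IsSymm) (u a : V) :
    B (B.reflection u a) (B.reflection u a) = B a a := by
  by_cases hu : B u u = 0
  · simp [reflection, hu]
  · simp only [reflection, map_sub, map_smul, LinearMap.sub_apply, LinearMap.smul_apply,
      smul_eq_mul, hB.eq u a]
    field_simp
    ring

lemma apply_sub_sub_of_apply_eq (hB : B.IsSymm) {a b : V} (h : B a a = B b b) :
    B (a - b) (a - b) = 2 * B a (a - b) := by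
  simp only [map_sub, LinearMap.sub_apply, hB.eq b a, h]
  ring

lemma reflection_sub_eq (hB : B.IsSymm) {a b : V} (h : B a a = B b b)
    (hab : B (a - b) (a - b) ≠ 0) : B.reflection (a - b) a = b := by
  have : 2 * (B a (a - b) / B (a - b) (a - b)) = 1 := by
    rw [← mul_div_assoc, ← apply_sub_sub_of_apply_eq hB h, div_self hab]
  rw [reflection, this, one_smul, sub_sub_cancel]

end LinearMap.BilinForm

-- Cauchy–Schwarz on the last `k` coordinates forces `β 0 = 0`, and then the tail of `β` vanishes.
lemma eq_zero_of_isotropic_of_orthogonal_timelike {k : ℕ} {α β : Fin (k + 1) → ℝ}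
    (hα : ∑ i : Fin k, α i.succ ^ 2 < α 0 ^ 2)
    (hαβ : ∑ i : Fin k, α i.succ * β i.succ = α 0 * β 0)
    (hβ : ∑ i : Fin k, β i.succ ^ 2 = β 0 ^ 2) : β = 0 := by
  have hcs :=
    Finset.sum_mul_sq_le_sq_mul_sq Finset.univ (fun i : Fin k => α i.succ) fun i => β i.succ
  rw [hαβ, hβ] at hcs
  have hβ0 : β 0 = 0 := by
    by_contra hne
    nlinarith [sq_pos_of_ne_zero hne]
  have hβs : ∀ i : Fin k, β i.succ = 0 := by
    rw [hβ0, zero_pow two_ne_zero, Finset.sum_eq_zero_iff_of_nonneg fun i _ => sq_nonneg _] at hβ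
    exact fun i => pow_eq_zero_iff two_ne_zero |>.1 (hβ i (Finset.mem_univ i))
  funext i
  exact Fin.cases hβ0 hβs i

namespace Matrix

open LinearMap.BilinForm

def IsLorentzian {n : ℕ} (M : Matrix (Fin n) (Fin n) ℝ) : Prop :=
  ∃ P : Matrix (Fin n) (Fin n) ℝ, IsUnit P.det ∧
    Pᵀ * M * P = diagonal fun i : Fin n => if (i : ℕ) = 0 then 1 else -1

lemma toBilin'_diagonal_apply {ι R : Type*} [Fintype ι] [DecidableEq ι] [CommSemiring R]
    (d x y : ι → R) :
    toBilin' (diagonal d) x y = ∑ i, d i * x i * y i := by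
  simp only [toBilin'_apply', mulVec_diagonal, dotProduct]
  exact Finset.sum_congr rfl fun i _ => by ring

variable {n : ℕ} {M : Matrix (Fin n) (Fin n) ℝ}

lemma IsLorentzian.eq_zero_of_isOrtho {a u : Fin n → ℝ} (hM : M.IsLorentzian)
    (ha : 0 < toBilin' M a a) (hau : toBilin' M a u = 0) (hu : toBilin' M u u = 0) : u = 0 := by
  obtain ⟨P, hP, hPM⟩ := hM
  have hcoord : ∀ x : Fin n → ℝ, P *ᵥ (P⁻¹ *ᵥ x) = x := fun x => by
    rw [mulVec_mulVec, mul_nonsing_inv _ hP, one_mulVec]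
  have hdiag : ∀ x y : Fin n → ℝ, toBilin' M x y =
      ∑ i : Fin n, (if (i : ℕ) = 0 then 1 else -1) * (P⁻¹ *ᵥ x) i * (P⁻¹ *ᵥ y) i := fun x y => by
    rw [← toBilin'_diagonal_apply, ← hPM, ← toBilin'_comp, LinearMap.BilinForm.comp_apply,
      toLin'_apply, toLin'_apply, hcoord, hcoord]
  rw [← hcoord u]
  obtain _ | k := n
  · simp
  simp only [hdiag, Fin.sum_univ_succ, Fin.val_zero, Fin.val_succ] at ha hau hu
  simp only [↓reduceIte, one_mul, Nat.add_one_ne_zero, neg_mul, Finset.sum_neg_distrib,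
    ← sq] at ha hau hu
  rw [eq_zero_of_isotropic_of_orthogonal_timelike (α := P⁻¹ *ᵥ a) (β := P⁻¹ *ᵥ u)
    (by linarith) (by linarith) (by linarith), mulVec_zero]

lemma IsLorentzian.apply_sub_sub_ne_zero {a b : Fin n → ℝ} (hM : M.IsLorentzian) (hMs : M.IsSymm)
    (ha : 0 < toBilin' M a a) (hab : toBilin' M a a = toBilin' M b b) (hne : a ≠ b) :
    toBilin' M (a - b) (a - b) ≠ 0 := by
  intro h
  have hortho : toBilin' M a (a - b) = 0 := by
    have := apply_sub_sub_of_apply_eq (isSymm_toBilin'_iff_isSymm.2 hMs) hab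
    linarith
  exact hne (sub_eq_zero.1 (hM.eq_zero_of_isOrtho ha hortho h))

lemma IsLorentzian.eq_smul_reflection {c : ℝ} {a b v : Fin n → ℝ} (hM : M.IsLorentzian)
    (hMs : M.IsSymm) (ha : 0 < toBilin' M (c • a) (c • a))
    (hab : toBilin' M (c • a) (c • a) = toBilin' M b b) (hne : c • a ≠ b) (hv : c • a - b = c • v) :
    toBilin' M v v ≠ 0 ∧ b = c • (toBilin' M).reflection v a := by
  have hw := hM.apply_sub_sub_ne_zero hMs ha hab hne
  have hrefl := reflection_sub_eq (isSymm_toBilin'_iff_isSymm.2 hMs) hab hw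
  rw [hv, map_smul, map_smul, LinearMap.smul_apply, smul_eq_mul, smul_eq_mul] at hw
  obtain ⟨hc, hcv⟩ := mul_ne_zero_iff.1 hw
  refine ⟨(mul_ne_zero_iff.1 hcv).2, ?_⟩
  rw [← hrefl, hv, reflection_smul_right _ hc, reflection_smul_left]

lemma continuousAt_reflection {ι : Type*} [Fintype ι] [DecidableEq ι] (M : Matrix ι ι ℝ)
    (a : ι → ℝ) {w : ι → ℝ} (hw : toBilin' M w w ≠ 0) :
    ContinuousAt (fun u => (toBilin' M).reflection u a) w := by
  simp only [reflection, toBilin'_apply'] at hw ⊢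
  fun_prop (disch := exact hw)

lemma IsLorentzian.mem_closure_range_reflection {a b : Fin n → ℝ} (hM : M.IsLorentzian)
    (hMs : M.IsSymm) (ha : 0 < toBilin' M a a) (hab : toBilin' M a a = toBilin' M b b) :
    b ∈ closure (Set.range fun u : Fin n → ℚ => (toBilin' M).reflection (Rat.cast ∘ u) a) := by
  rcases eq_or_ne a b with rfl | hne
  · exact subset_closure ⟨0, by simp [reflection]⟩
  have hw := hM.apply_sub_sub_ne_zero hMs ha hab hne
  have hdense : a - b ∈ closure (Set.range fun u : Fin n → ℚ => (Rat.cast ∘ u : Fin n → ℝ)) :=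
    DenseRange.piMap (fun _ => Rat.denseRange_cast) _
  have := mem_closure_image (continuousAt_reflection M a hw) hdense
  rwa [← Set.range_comp, reflection_sub_eq (isSymm_toBilin'_iff_isSymm.2 hMs) hab hw] at this

variable {ι K L : Type*} [Fintype ι] [DecidableEq ι] [Field K] [Field L]

lemma toBilin'_map_apply (f : K →+* L) (M : Matrix ι ι K) (x y : ι → K) :
    toBilin' (M.map f) (f ∘ x) (f ∘ y) = f (toBilin' M x y) := by
  simp [toBilin'_apply, map_sum, map_mul]

lemma reflection_toBilin'_map (f : K →+* L) (M : Matrix ι ι K) (u a : ι → K) :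
    (toBilin' (M.map f)).reflection (f ∘ u) (f ∘ a) = f ∘ (toBilin' M).reflection u a := by
  funext i
  simp [reflection, toBilin'_map_apply, map_div₀, map_ofNat]

end Matrix

open LinearMap.BilinForm

theorem Qlm_dense_in_Ql_general
    (ρ : ℕ)
    (G : Matrix (Fin ρ) (Fin ρ) ℚ) (hGsymm : G.IsSymm)
    (hsig : ∃ P : Matrix (Fin ρ) (Fin ρ) ℝ, IsUnit P.det ∧
      Pᵀ * (G.map (fun q : ℚ => (q : ℝ))) * P =
        Matrix.diagonal (fun i : Fin ρ => if (i : ℕ) = 0 then (1 : ℝ) else -1))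
    (ℓ : ℤ) (hℓ : 0 < ℓ) (m : ℚ)
    (ipR : (Fin ρ → ℝ) → (Fin ρ → ℝ) → ℝ)
    (hipR : ∀ x y : Fin ρ → ℝ, ipR x y = ∑ i, ∑ j, (G i j : ℝ) * x i * y j)
    (ξ₀ : Fin ρ → ℝ) (x₀ : Fin ρ → ℚ)
    (hξ₀ : ξ₀ = fun i => Real.sqrt (m : ℝ) * (x₀ i : ℝ))
    (hξ₀sq : ipR ξ₀ ξ₀ = 2 * (ℓ : ℝ)) :
    (∀ ξ : Fin ρ → ℝ, ipR ξ ξ = 2 * (ℓ : ℝ) →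
      (∃ x : Fin ρ → ℚ, ξ = fun i => Real.sqrt (m : ℝ) * (x i : ℝ)) →
      ξ = ξ₀ ∨
        ∃ u : Fin ρ → ℚ,
          ipR (fun j => (u j : ℝ)) (fun j => (u j : ℝ)) ≠ 0 ∧
          ξ = fun i => Real.sqrt (m : ℝ) *
            ((x₀ i : ℝ) -
              2 * (ipR (fun j => (x₀ j : ℝ)) (fun j => (u j : ℝ)) /
                   ipR (fun j => (u j : ℝ)) (fun j => (u j : ℝ))) * (u i : ℝ))) ∧
    (∀ ξ : Fin ρ → ℝ, ipR ξ ξ = 2 * (ℓ : ℝ) →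
      ξ ∈ closure {ζ : Fin ρ → ℝ |
        (∃ x : Fin ρ → ℚ, ζ = fun i => Real.sqrt (m : ℝ) * (x i : ℝ)) ∧
        ipR ζ ζ = 2 * (ℓ : ℝ)}) := by
  set B := toBilin' (G.map ((↑) : ℚ → ℝ))
  have hipB : ∀ x y, ipR x y = B x y := fun x y => by
    rw [hipR, toBilin'_apply]
    exact Finset.sum_congr rfl fun i _ => Finset.sum_congr rfl fun j _ => by
      rw [map_apply]; ring
  simp only [hipB] at hξ₀sq ⊢
  obtain rfl : ξ₀ = √(m : ℝ) • (Rat.cast ∘ x₀ : Fin ρ → ℝ) := hξ₀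
  have hL : (G.map ((↑) : ℚ → ℝ)).IsLorentzian := hsig
  have hpos : 0 < 2 * (ℓ : ℝ) := by positivity
  rw [← hξ₀sq] at hpos
  refine ⟨fun ξ hξ ⟨x, hx⟩ => ?_, fun ξ hξ => ?_⟩
  · rcases eq_or_ne (√(m : ℝ) • (Rat.cast ∘ x₀ : Fin ρ → ℝ)) ξ with hne | hne
    · exact .inl hne.symm
    have hv : √(m : ℝ) • (Rat.cast ∘ x₀ : Fin ρ → ℝ) - ξ =
        √(m : ℝ) • (Rat.cast ∘ (x₀ - x)) := by
      subst hx
      funext i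
      simp [mul_sub]
    exact .inr ⟨x₀ - x, hL.eq_smul_reflection (hGsymm.map _) hpos (hξ₀sq.trans hξ.symm) hne hv⟩
  · refine closure_mono ?_
      (hL.mem_closure_range_reflection (hGsymm.map _) hpos (hξ₀sq.trans hξ.symm))
    rintro _ ⟨u, rfl⟩
    refine ⟨⟨(toBilin' G).reflection u x₀, ?_⟩,
      (apply_reflection_reflection (isSymm_toBilin'_iff_isSymm.2 (hGsymm.map _)) _ _).trans
        hξ₀sq⟩
    dsimp only
    rw [reflection_smul_left, ← Rat.coe_castHom, reflection_toBilin'_map]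
    rfl

/-- on `NS ⊗ ℝ` (modelled as `Fin ρ → ℝ` with a rational
symmetric form of signature `(1, ρ−1)`), the set
`Q_{ℓ,m} = {ξ ∈ √m·(NS⊗ℚ) : (ξ²) = 2ℓ}`, when nonempty (containing `ξ₀`),
is dense in `Q_ℓ = {ξ : (ξ²) = 2ℓ}`; moreover every element of `Q_{ℓ,m}` is
either `ξ₀` or a reflection `√m(η₀ − 2((η₀,u)/(u²))·u)` of `η₀ = ξ₀/√m`
for some rational `u` with `(u²) ≠ 0`. -/
theorem Qlm_dense_in_Ql
    (ρ : ℕ) (hρ : 2 ≤ ρ)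
    (G : Matrix (Fin ρ) (Fin ρ) ℚ) (hGsymm : G.IsSymm)
    (hsig : ∃ P : Matrix (Fin ρ) (Fin ρ) ℝ, IsUnit P.det ∧
      Pᵀ * (G.map (fun q : ℚ => (q : ℝ))) * P =
        Matrix.diagonal (fun i : Fin ρ => if (i : ℕ) = 0 then (1 : ℝ) else -1))
    (ℓ : ℤ) (hℓ : 0 < ℓ) (m : ℚ) (hm : 0 < m)
    (ipR : (Fin ρ → ℝ) → (Fin ρ → ℝ) → ℝ)
    (hipR : ∀ x y : Fin ρ → ℝ, ipR x y = ∑ i, ∑ j, (G i j : ℝ) * x i * y j)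
    (ξ₀ : Fin ρ → ℝ) (x₀ : Fin ρ → ℚ)
    (hξ₀ : ξ₀ = fun i => Real.sqrt (m : ℝ) * (x₀ i : ℝ))
    (hξ₀sq : ipR ξ₀ ξ₀ = 2 * (ℓ : ℝ)) :
    (∀ ξ : Fin ρ → ℝ, ipR ξ ξ = 2 * (ℓ : ℝ) →
      (∃ x : Fin ρ → ℚ, ξ = fun i => Real.sqrt (m : ℝ) * (x i : ℝ)) →
      ξ = ξ₀ ∨
        ∃ u : Fin ρ → ℚ,
          ipR (fun j => (u j : ℝ)) (fun j => (u j : ℝ)) ≠ 0 ∧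
          ξ = fun i => Real.sqrt (m : ℝ) *
            ((x₀ i : ℝ) -
              2 * (ipR (fun j => (x₀ j : ℝ)) (fun j => (u j : ℝ)) /
                   ipR (fun j => (u j : ℝ)) (fun j => (u j : ℝ))) * (u i : ℝ))) ∧
    (∀ ξ : Fin ρ → ℝ, ipR ξ ξ = 2 * (ℓ : ℝ) →
      ξ ∈ closure {ζ : Fin ρ → ℝ |
        (∃ x : Fin ρ → ℚ, ζ = fun i => Real.sqrt (m : ℝ) * (x i : ℝ)) ∧
        ipR ζ ζ = 2 * (ℓ : ℝ)}) :=
  Qlm_dense_in_Ql_general ρ G hGsymm hsig ℓ hℓ m ipR hipR ξ₀ x₀ hξ₀ hξ₀sq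
end

section
/- Let Λ be the algebraic Mukai lattice of an abelian surface X with NS(X) = ℤH, (H²) = 2n, and let ℓ ∈ ℤ_{>0}. Suppose u₁, u₂ ∈ Λ are isotropic with ⟨u₁,u₂⟩ = 1 and (1,0,−ℓ) = ℓu₁ + u₂, and rk u₁ ≠ 0. Write u₁ = (px, pqξ, y) with ξ ∈ NS primitive. If q²(ξ²) ≠ 0, then u₁ = (p²s, pqξ, q²t) with (ξ²) = 2st, st > 0, and ℓsp² − tq² = 1, and u₂ = −(q²t, ℓpqξ, ℓ²p²s). -/
/-- The Mukai pairing on `ℤ³ = ℤ ⊕ ℤH ⊕ ℤ` for `NS(X) = ℤH`, `(H²) = 2n`: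
`⟨(r,dH,a),(r',d'H,a')⟩ = 2ndd' − ra' − r'a`. -/
def mukaiPairing3 (n : ℤ) (x y : ℤ × ℤ × ℤ) : ℤ :=
  2 * n * x.2.1 * y.2.1 - x.1 * y.2.2 - y.1 * x.2.2

/-- if `(1,0,−ℓ) = ℓu₁ + u₂` with `u₁, u₂` isotropic,
`⟨u₁,u₂⟩ = 1`, `rk u₁ ≠ 0`, and `u₁ = (px, pqH, y)` with `gcd(x,q) = 1`
(`H` is the primitive ample class), and `q²(H²) ≠ 0`, then
`u₁ = (p²s, pqH, q²t)` with `(H²) = 2st`, `st > 0`, `ℓsp² − tq² = 1`, and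
`u₂ = −(q²t, ℓpqH, ℓ²p²s)`. -/
theorem decomposition_classification
    (n ℓ : ℤ) (hn : 0 < n) (hℓ : 0 < ℓ)
    (u₁ u₂ : ℤ × ℤ × ℤ) (p q x y : ℤ)
    (hu₁ : u₁ = (p * x, p * q, y))
    (hgcd : IsCoprime x q)
    (hprim : ∀ (m : ℤ) (w : ℤ × ℤ × ℤ), u₁ = m • w → IsUnit m)
    (h1 : mukaiPairing3 n u₁ u₁ = 0) (h2 : mukaiPairing3 n u₂ u₂ = 0)
    (h12 : mukaiPairing3 n u₁ u₂ = 1)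
    (hdec : ((1 : ℤ), (0 : ℤ), -ℓ) = ℓ • u₁ + u₂)
    (hrk : u₁.1 ≠ 0)
    (hq : q ^ 2 * (2 * n) ≠ 0) :
    ∃ s t : ℤ, u₁ = (p ^ 2 * s, p * q, q ^ 2 * t) ∧ 2 * n = 2 * (s * t) ∧
      0 < s * t ∧ ℓ * s * p ^ 2 - t * q ^ 2 = 1 ∧
      u₂ = (-(q ^ 2 * t), -(ℓ * p * q), -(ℓ ^ 2 * p ^ 2 * s)) := by
  subst hu₁
  simp only [ne_eq] at hrk
  have hp : p ≠ 0 := fun h => hrk (by simp [h])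
  -- determine u₂ from hdec
  obtain ⟨a, b, c⟩ := u₂
  simp only [Prod.smul_mk, smul_eq_mul, Prod.mk_add_mk, Prod.mk.injEq] at hdec
  obtain ⟨ha, hb, hc⟩ := hdec
  -- isotropy of u₁ : n * p * q^2 = x * y
  simp only [mukaiPairing3] at h1 h12
  have h1' : n * p * (q ^ 2) = x * y := by
    have : p * (n * p * q ^ 2 - x * y) = 0 := by ring_nf; ring_nf at h1; linarith
    rcases mul_eq_zero.mp this with h | h
    · exact absurd h hp
    · linarith
  -- q^2 divides y
  have hdvd : q ^ 2 ∣ y := by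
    refine (IsCoprime.pow_left hgcd.symm : IsCoprime (q ^ 2) x).dvd_of_dvd_mul_left ?_
    exact ⟨n * p, by linarith [h1']⟩
  obtain ⟨t, ht⟩ := hdvd
  -- pairing condition gives ℓ p x - y = 1
  have hkey : ℓ * (p * x) - y = 1 := by
    have hc' : c = -ℓ - ℓ * y := by linarith
    have ha' : a = 1 - ℓ * (p * x) := by linarith
    have hb' : b = -(ℓ * (p * q)) := by linarith
    subst hc' ha' hb'
    linear_combination h12 + 2 * ℓ * p * h1'
  -- coprimality of p and t, hence p ∣ x
  have hnp : n * p = x * t := by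
    have hq2 : (q : ℤ) ^ 2 ≠ 0 := fun h => hq (by rw [h]; ring)
    have : n * p * q ^ 2 = x * t * q ^ 2 := by rw [h1', ht]; ring
    exact mul_right_cancel₀ hq2 this
  have hcop : IsCoprime p t := ⟨ℓ * x, -(q ^ 2), by rw [ht] at hkey; linarith⟩
  have hpx : p ∣ x := by
    refine hcop.dvd_of_dvd_mul_right ⟨n, by linarith [hnp]⟩
  obtain ⟨s, hs⟩ := hpx
  have hnst : n = s * t := by
    have : p * n = p * (s * t) := by rw [mul_comm p n, hnp, hs]; ring
    exact mul_left_cancel₀ hp this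
  refine ⟨s, t, by rw [hs, ht]; ring_nf, by rw [hnst], by rw [← hnst]; exact hn, ?_, ?_⟩
  · have := hkey; rw [hs, ht] at this; nlinarith [this]
  · have ha' : a = 1 - ℓ * (p * x) := by linarith
    have hc' : c = -ℓ - ℓ * y := by linarith
    have hb' : b = -(ℓ * (p * q)) := by linarith
    rw [ha', hb', hc', hs, ht]
    have h1 : ℓ * (p * (p * s)) - q ^ 2 * t = 1 := by rw [hs, ht] at hkey; linarith
    refine Prod.ext ?_ (Prod.ext ?_ ?_) <;> simp <;> nlinarith [h1]
end

section
/- Let Λ be the algebraic Mukai lattice of an abelian surface with rk NS(X) = 1 (signature (2,1)). Then there is no decomposition v = u₁ + u₂ + u₃ with ⟨u_i²⟩ = 0 for i = 1,2,3 and ⟨u_i, u_j⟩ = 1 for i ≠ j. -/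
/-- in the algebraic Mukai lattice of an abelian surface with
`rk NS(X) = 1` (signature `(2,1)`), there is no decomposition
`v = u₁ + u₂ + u₃` with `⟨u_i²⟩ = 0` and `⟨u_i,u_j⟩ = 1` for `i ≠ j`. -/
theorem no_triple_isotropic_decomposition
    (n : ℤ) (hn : 0 < n) (v : ℤ × ℤ × ℤ) :
    ¬ ∃ u₁ u₂ u₃ : ℤ × ℤ × ℤ, v = u₁ + u₂ + u₃ ∧
        mukaiPairing3 n u₁ u₁ = 0 ∧ mukaiPairing3 n u₂ u₂ = 0 ∧
        mukaiPairing3 n u₃ u₃ = 0 ∧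
        mukaiPairing3 n u₁ u₂ = 1 ∧ mukaiPairing3 n u₂ u₃ = 1 ∧
        mukaiPairing3 n u₁ u₃ = 1 := by
  rintro ⟨⟨r1, d1, a1⟩, ⟨r2, d2, a2⟩, ⟨r3, d3, a3⟩, -, h11, h22, h33, h12, h23, h13⟩
  simp only [mukaiPairing3] at h11 h22 h33 h12 h23 h13
  -- D is the determinant of the coordinate matrix of u₁, u₂, u₃;
  -- the Gram determinant identity gives 2 n D² = -2, impossible for n > 0.
  set D : ℤ := r1 * (d2 * a3 - d3 * a2) - d1 * (r2 * a3 - r3 * a2)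
      + a1 * (r2 * d3 - r3 * d2) with hD
  have key : 2 * n * D ^ 2 = -2 := by
    linear_combination
      (-(2 * n * d2 * d2 - r2 * a2 - r2 * a2) * (2 * n * d3 * d3 - r3 * a3 - r3 * a3)
          + (2 * n * d2 * d3 - r2 * a3 - r3 * a2) ^ 2) * h11
      + ((2 * n * d1 * d3 - r1 * a3 - r3 * a1) ^ 2) * h22
      + ((2 * n * d1 * d2 - r1 * a2 - r2 * a1) ^ 2) * h33
      + (-2 * (2 * n * d1 * d3 - r1 * a3 - r3 * a1) * (2 * n * d2 * d3 - r2 * a3 - r3 * a2)) * h12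
      + (-2 * (2 * n * d2 * d3 - r2 * a3 - r3 * a2)) * h13
      + (-2 : ℤ) * h23
  have hpos : 0 ≤ 2 * n * D ^ 2 := by positivity
  omega
end

section
/- Let Λ be an even lattice, v primitive with ⟨v²⟩ = 2ℓ ≥ 6, and u ∈ Λ isotropic with ⟨v,u⟩ = 2. Set d_u = v − ℓu. If 2 ∤ ℓ then v + d_u = 2v − ℓu is primitive. If 2 ∣ ℓ, write v = au + bw in a saturated rank-2 sublattice containing v with ℤu + ℤw saturated; then b ∈ {±1, ±2}, and: if b = ±1 then (v+d_u)/2 is primitive; if b = ±2 and ℓ ≡ 2 mod 4 then (v+d_u)/4 ∈ Λ is primitive; if b = ±2 and ℓ ≡ 0 mod 4 then (v+d_u)/2 is primitive. -/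
/-!
Divisibility is detected by pairing with the isotropic vector `u`: if `z = m • x` then `m ∣ ⟨z, u⟩`,
which is `4`, `2` or `1` for the vectors in question, so only the factor `2` has to be excluded.
For odd `ℓ`, `2v − ℓu = 2x` would make `u` divisible by `2`. For odd `b`, saturation of `ℤu + ℤw`
turns `v − (ℓ/2)u = 2x` into `x = cu + ew`, and pairing with `u` gives `b = 2e`. For `b = 2s`,
primitivity of `v` forces `a` odd, and expanding `⟨v²⟩` with `⟨w²⟩` even gives `ℓ = 2a + 4W`;
so `ℓ ≡ 2 (mod 4)` (the case `b = ±2`, `4 ∣ ℓ` never occurs) and `(2v − ℓu)/4 = sw − Wu`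
pairs to `s⟨w, u⟩ = 1` with `u`.
-/

theorem eq_one_or_neg_one_or_two_or_neg_two_of_mul_eq_two {b c : ℤ} (h : b * c = 2) :
    b = 1 ∨ b = -1 ∨ b = 2 ∨ b = -2 := by
  have hb : b ∣ 2 := ⟨c, h.symm⟩
  have := Int.le_of_dvd two_pos hb
  have := Int.le_of_dvd two_pos (neg_dvd.2 hb)
  have : b ≠ 0 := by rintro rfl; simp at h
  omega

section

variable {Λ : Type*} [AddCommGroup Λ]

def IsPrimitive (z : Λ) : Prop :=
  ∀ (m : ℤ) (x : Λ), z = m • x → IsUnit m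

theorem IsPrimitive.ne_two_smul {z : Λ} (hz : IsPrimitive z) (x : Λ) : z ≠ (2 : ℤ) • x :=
  fun h => by simpa [Int.isUnit_iff] using hz 2 x h

theorem IsPrimitive.odd_of_eq_smul_add_two_mul_smul {u v w : Λ} {a s : ℤ} (hv : IsPrimitive v)
    (hveq : v = a • u + (2 * s) • w) : Odd a := by
  by_contra ha
  obtain ⟨k, rfl⟩ := Int.not_odd_iff_even.1 ha
  exact hv.ne_two_smul (k • u + s • w) (by rw [hveq]; module)

theorem IsPrimitive.two_smul_sub_smul_ne_two_smul {u : Λ} (hu : IsPrimitive u) {ℓ : ℤ}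
    (hℓ : Odd ℓ) (v x : Λ) : (2 : ℤ) • v - ℓ • u ≠ (2 : ℤ) • x := by
  obtain ⟨j, rfl⟩ := hℓ
  intro hx
  exact hu.ne_two_smul (v - x - j • u) (by linear_combination (norm := module) -hx)

-- `•` on `Λ` stays the group's `zsmul`, not this action, so `module` no longer applies below.
variable [Module ℤ Λ] (B : Λ →ₗ[ℤ] Λ →ₗ[ℤ] ℤ)

theorem dvd_apply_of_eq_smul {z x : Λ} {m : ℤ} (h : z = m • x) (y : Λ) : m ∣ B z y :=
  ⟨B x y, by simp [h, map_zsmul]⟩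

theorem isPrimitive_of_apply_eq_one {z y : Λ} (h : B z y = 1) : IsPrimitive z :=
  fun _ _ hz => isUnit_of_dvd_one (h ▸ dvd_apply_of_eq_smul B hz y)

theorem isPrimitive_of_apply_dvd_two_pow {z : Λ} (y : Λ) {k : ℕ} (hz : B z y ∣ 2 ^ k)
    (h2 : ∀ x : Λ, z ≠ (2 : ℤ) • x) : IsPrimitive z := by
  intro m x hzx
  have hm : ¬ 2 ∣ m := by
    rintro ⟨n, rfl⟩
    exact h2 (n • x) (by rw [hzx, mul_zsmul])
  exact (Int.prime_two.coprime_iff_not_dvd.2 hm).pow_left.symm.isUnit_of_dvd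
    ((dvd_apply_of_eq_smul B hzx y).trans hz)

variable {B}

theorem mul_apply_eq_of_eq_smul_add_smul {u v w : Λ} {a b : ℤ} (hveq : v = a • u + b • w)
    (huu : B u u = 0) : b * B w u = B v u := by
  simp [hveq, map_zsmul, huu]

theorem isPrimitive_two_smul_sub_smul {u v : Λ} (hu : IsPrimitive u) (huu : B u u = 0)
    (hvu : B v u = 2) {ℓ : ℤ} (hℓ : Odd ℓ) : IsPrimitive ((2 : ℤ) • v - ℓ • u) :=
  isPrimitive_of_apply_dvd_two_pow B u (k := 2) (by simp [map_zsmul, huu, hvu])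
    (hu.two_smul_sub_smul_ne_two_smul hℓ v)

theorem isPrimitive_sub_smul_of_odd {u v w : Λ} {a b : ℤ} (hveq : v = a • u + b • w)
    (hsat : ∀ x : Λ, (∃ c e : ℤ, (2 : ℤ) • x = c • u + e • w) → ∃ c e : ℤ, x = c • u + e • w)
    (huu : B u u = 0) (hvu : B v u = 2) (hb : Odd b) (L : ℤ) : IsPrimitive (v - L • u) := by
  refine isPrimitive_of_apply_dvd_two_pow B u (k := 1) (by simp [map_zsmul, huu, hvu]) ?_
  intro x hx
  obtain ⟨c, e, rfl⟩ := hsat x ⟨a - L, b, by rw [← hx, hveq, sub_zsmul]; abel⟩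
  have hbw : b * B w u = 2 := hvu ▸ mul_apply_eq_of_eq_smul_add_smul hveq huu
  have hew : e * B w u = 1 := by
    have := congrArg (fun z => B z u) hx
    simp only [map_sub, map_add, map_zsmul, LinearMap.sub_apply, LinearMap.add_apply,
      LinearMap.smul_apply, smul_eq_mul, huu, hvu] at this
    linarith
  obtain ⟨k, hk⟩ := hb
  have : b = 2 * e := by linear_combination (-b) * hew + e * hbw
  omega

theorem exists_eq_two_mul_add_four_mul {u v w : Λ} {a s ℓ : ℤ} (hsymm : ∀ x y : Λ, B x y = B y x)
    (heven : ∀ x : Λ, 2 ∣ B x x) (hveq : v = a • u + (2 * s) • w) (huu : B u u = 0)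
    (hsw : s * B w u = 1) (hv : B v v = 2 * ℓ) : ∃ W, ℓ = 2 * a + 4 * W := by
  obtain ⟨W, hW⟩ := heven w
  refine ⟨s ^ 2 * W, mul_left_cancel₀ two_ne_zero ?_⟩
  simp only [hveq, map_add, map_zsmul, LinearMap.add_apply, LinearMap.smul_apply, smul_eq_mul,
    huu, hsymm u w, hW] at hv
  linear_combination -hv + 4 * a * hsw

theorem exists_four_smul_eq_and_isPrimitive {u v w : Λ} {a s ℓ W : ℤ}
    (hveq : v = a • u + (2 * s) • w) (hℓ : ℓ = 2 * a + 4 * W) (huu : B u u = 0)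
    (hsw : s * B w u = 1) : ∃ z : Λ, (4 : ℤ) • z = (2 : ℤ) • v - ℓ • u ∧ IsPrimitive z := by
  refine ⟨s • w - W • u, ?_, isPrimitive_of_apply_eq_one B (y := u) ?_⟩
  · subst hveq hℓ
    simp only [zsmul_sub, zsmul_add, add_zsmul, mul_zsmul]
    abel
  · simp [map_zsmul, huu, hsw]

end

theorem v_plus_du_divisibility_general
    {Λ : Type*} [AddCommGroup Λ] [Module ℤ Λ]
    (B : Λ →ₗ[ℤ] Λ →ₗ[ℤ] ℤ) (hsymm : ∀ x y : Λ, B x y = B y x)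
    (heven : ∀ x : Λ, 2 ∣ B x x)
    (ℓ : ℤ)
    (v u : Λ)
    (hvprim : ∀ (m : ℤ) (x : Λ), v = m • x → IsUnit m)
    (huprim : ∀ (m : ℤ) (x : Λ), u = m • x → IsUnit m)
    (hv : B v v = 2 * ℓ) (hu : B u u = 0) (hvu : B v u = 2) :
    (¬ (2 ∣ ℓ) →
      ∀ (m : ℤ) (x : Λ), (2 : ℤ) • v - ℓ • u = m • x → IsUnit m) ∧
    (2 ∣ ℓ → ∀ (w : Λ) (a b : ℤ), v = a • u + b • w →
      (∀ (m : ℤ) (x : Λ), m ≠ 0 → (∃ c e : ℤ, m • x = c • u + e • w) →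
        ∃ c e : ℤ, x = c • u + e • w) →
      ((b = 1 ∨ b = -1 ∨ b = 2 ∨ b = -2) ∧
       ((b = 1 ∨ b = -1) →
         ∀ (m : ℤ) (x : Λ), v - (ℓ / 2) • u = m • x → IsUnit m) ∧
       ((b = 2 ∨ b = -2) → ℓ % 4 = 2 →
         ∃ z : Λ, (4 : ℤ) • z = (2 : ℤ) • v - ℓ • u ∧
           ∀ (m : ℤ) (x : Λ), z = m • x → IsUnit m) ∧
       ((b = 2 ∨ b = -2) → ℓ % 4 = 0 →
         ∃ z : Λ, (2 : ℤ) • z = (2 : ℤ) • v - ℓ • u ∧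
           ∀ (m : ℤ) (x : Λ), z = m • x → IsUnit m))) := by
  refine ⟨fun hℓ => isPrimitive_two_smul_sub_smul huprim hu hvu
    (Int.not_even_iff_odd.1 (mt even_iff_two_dvd.1 hℓ)), ?_⟩
  rintro ⟨L, rfl⟩ w a b hveq hsat
  have hbw : b * B w u = 2 := hvu ▸ mul_apply_eq_of_eq_smul_add_smul hveq hu
  have h_even_b : b = 2 ∨ b = -2 → 2 * L % 4 = 2 ∧
      ∃ z : Λ, (4 : ℤ) • z = (2 : ℤ) • v - (2 * L) • u ∧ IsPrimitive z := by
    intro hb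
    obtain ⟨s, rfl⟩ : 2 ∣ b := by omega
    have hsw : s * B w u = 1 := by linarith
    obtain ⟨W, hW⟩ := exists_eq_two_mul_add_four_mul hsymm heven hveq hu hsw hv
    obtain ⟨k, rfl⟩ := IsPrimitive.odd_of_eq_smul_add_two_mul_smul hvprim hveq
    exact ⟨by omega, exists_four_smul_eq_and_isPrimitive hveq hW hu hsw⟩
  refine ⟨eq_one_or_neg_one_or_two_or_neg_two_of_mul_eq_two hbw, fun hb => ?_,
    fun hb _ => (h_even_b hb).2, fun hb hL => absurd (h_even_b hb).1 (by omega)⟩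
  rw [show 2 * L / 2 = L by omega]
  exact isPrimitive_sub_smul_of_odd hveq (fun x => hsat 2 x two_ne_zero) hu hvu
    (by rcases hb with rfl | rfl <;> decide) L

/-- let `v` be primitive with `⟨v²⟩ = 2ℓ ≥ 6`, `u` primitive
isotropic with `⟨v,u⟩ = 2`, and `d_u = v − ℓu` (so `v + d_u = 2v − ℓu`).
If `2 ∤ ℓ` then `v + d_u` is primitive. If `2 ∣ ℓ` and `v = au + bw` in a
saturated sublattice `ℤu + ℤw`, then `b ∈ {±1, ±2}`; if `b = ±1` then
`(v + d_u)/2 = v − (ℓ/2)u` is primitive; if `b = ±2` and `ℓ ≡ 2 (mod 4)`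
then `(v + d_u)/4 ∈ Λ` and is primitive; if `b = ±2` and `ℓ ≡ 0 (mod 4)`
then `(v + d_u)/2 ∈ Λ` and is primitive. -/
theorem v_plus_du_divisibility
    {Λ : Type*} [AddCommGroup Λ] [Module ℤ Λ] [NoZeroSMulDivisors ℤ Λ]
    (B : Λ →ₗ[ℤ] Λ →ₗ[ℤ] ℤ) (hsymm : ∀ x y : Λ, B x y = B y x)
    (heven : ∀ x : Λ, 2 ∣ B x x)
    (ℓ : ℤ) (hℓ : 3 ≤ ℓ)
    (v u : Λ)
    (hvprim : ∀ (m : ℤ) (x : Λ), v = m • x → IsUnit m)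
    (huprim : ∀ (m : ℤ) (x : Λ), u = m • x → IsUnit m)
    (hv : B v v = 2 * ℓ) (hu : B u u = 0) (hvu : B v u = 2) :
    (¬ (2 ∣ ℓ) →
      ∀ (m : ℤ) (x : Λ), (2 : ℤ) • v - ℓ • u = m • x → IsUnit m) ∧
    (2 ∣ ℓ → ∀ (w : Λ) (a b : ℤ), v = a • u + b • w →
      (∀ (m : ℤ) (x : Λ), m ≠ 0 → (∃ c e : ℤ, m • x = c • u + e • w) →
        ∃ c e : ℤ, x = c • u + e • w) →
      ((b = 1 ∨ b = -1 ∨ b = 2 ∨ b = -2) ∧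
       ((b = 1 ∨ b = -1) →
         ∀ (m : ℤ) (x : Λ), v - (ℓ / 2) • u = m • x → IsUnit m) ∧
       ((b = 2 ∨ b = -2) → ℓ % 4 = 2 →
         ∃ z : Λ, (4 : ℤ) • z = (2 : ℤ) • v - ℓ • u ∧
           ∀ (m : ℤ) (x : Λ), z = m • x → IsUnit m) ∧
       ((b = 2 ∨ b = -2) → ℓ % 4 = 0 →
         ∃ z : Λ, (2 : ℤ) • z = (2 : ℤ) • v - ℓ • u ∧
           ∀ (m : ℤ) (x : Λ), z = m • x → IsUnit m))) :=
  v_plus_du_divisibility_general B hsymm heven ℓ v u hvprim huprim hv hu hvu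
end
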